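/- arXiv:2302.11995 — 4 statements merged into one kernel-verified Lean document; each statement's English description precedes it below -/
import Mathlib

section
/- Let R be a system with finite Q, C, finite outcome type A, bunch PMFs, and let C be a well-fitting connection-coupling rule (assigning to each connection a unique joint PMF with the prescribed marginals, which is the identity coupling when the marginals coincide). Then the consistification R‡ — whose main bunches (·,c) have the distribution of R's bunch at c with contents relabeled (q,c), and whose auxiliary bunches (q,·) have the distribution C[R_q] — is consistently connected: for every content (q,c) of R‡, the marginal distribution of the variable with content (q,c) in context (·,c) equals its marginal distribution in context (q,·). -/
open scoped ENNReal

/-- Contents of the consistified format: pairs `(q,c)` with `q ≺ c`. -/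
def ConsContent {Q C : Type} (rel : Q → C → Prop) := {p : Q × C // rel p.1 p.2}

instance {Q C : Type} [Fintype Q] [Fintype C] (rel : Q → C → Prop)
    [∀ q c, Decidable (rel q c)] : Fintype (ConsContent rel) :=
  inferInstanceAs (Fintype {p : Q × C // rel p.1 p.2})

/-- The relation of the consistified format: `(q,c) ≺‡ (·,c')` iff `c = c'`,
`(q,c) ≺‡ (q',·)` iff `q = q'`.  Main contexts are `Sum.inl c`, auxiliary
contexts are `Sum.inr q`. -/
def consRel {Q C : Type} (rel : Q → C → Prop) :
    ConsContent rel → (C ⊕ Q) → Prop :=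
  fun p => Sum.elim (fun c => p.1.2 = c) (fun q => p.1.1 = q)

instance {Q C : Type} [DecidableEq Q] [DecidableEq C] (rel : Q → C → Prop) :
    ∀ (p : ConsContent rel) (c' : C ⊕ Q), Decidable (consRel rel p c')
  | p, Sum.inl c => inferInstanceAs (Decidable (p.1.2 = c))
  | p, Sum.inr q => inferInstanceAs (Decidable (p.1.1 = q))

/-- The marginal distribution of content `q` in the bunch of context `c`
(a member of the connection of `q`). -/
noncomputable def connMarg {Q C A : Type} (rel : Q → C → Prop)
    (bunch : ∀ c : C, PMF ({q : Q // rel q c} → A))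
    (q : Q) (c : {c : C // rel q c}) : PMF A :=
  (bunch c.1).map (fun f => f ⟨q, c.2⟩)

/-- A well-fitting connection-coupling rule: to every family of one-dimensional
distributions it assigns a *unique* joint distribution (a coupling of the family),
which is the identity coupling whenever all members of the family coincide. -/
structure WellFittingRule (A : Type) : Type 1 where
  rule : ∀ (ι : Type) [Fintype ι], (ι → PMF A) → PMF (ι → A)
  marg : ∀ (ι : Type) [Fintype ι] (ν : ι → PMF A) (i : ι),
    (rule ι ν).map (fun g => g i) = ν i
  ident : ∀ (ι : Type) [Fintype ι] (ν : ι → PMF A), (∀ i j, ν i = ν j) →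
    ∀ g ∈ (rule ι ν).support, ∀ i j : ι, g i = g j

/-- `S` is an overall coupling of the system `(rel, bunch)`: a joint distribution
whose restriction to each context `c` is distributed as the bunch of `c`. -/
def BunchMatch {Q C A : Type} (rel : Q → C → Prop)
    (bunch : ∀ c : C, PMF ({q : Q // rel q c} → A))
    (S : PMF (ConsContent rel → A)) : Prop :=
  ∀ c : C, S.map (fun f (q : {q : Q // rel q c}) => f ⟨(q.1, c), q.2⟩) = bunch c

/-- Consistent connectedness: variables sharing a content are identically
distributed across contexts. -/
def ConsistentlyConnected {Q C A : Type} (rel : Q → C → Prop)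
    (bunch : ∀ c : C, PMF ({q : Q // rel q c} → A)) : Prop :=
  ∀ (q : Q) (c c' : C) (h : rel q c) (h' : rel q c'),
    (bunch c).map (fun f => f ⟨q, h⟩) = (bunch c').map (fun f => f ⟨q, h'⟩)

/-- Traditional noncontextuality: some overall coupling makes every connection
an identity coupling (its coordinates are almost surely equal). -/
def TradNoncontextual {Q C A : Type} (rel : Q → C → Prop)
    (bunch : ∀ c : C, PMF ({q : Q // rel q c} → A)) : Prop :=
  ∃ S : PMF (ConsContent rel → A), BunchMatch rel bunch S ∧
    ∀ f ∈ S.support, ∀ (q : Q) (c c' : C) (h : rel q c) (h' : rel q c'),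
      f ⟨(q, c), h⟩ = f ⟨(q, c'), h'⟩

/-- `C`-noncontextuality: some overall coupling induces on every connection
exactly the coupling prescribed by the rule `W`. -/
def CNoncontextual {Q C A : Type} [Fintype C] (rel : Q → C → Prop)
    [∀ q c, Decidable (rel q c)]
    (bunch : ∀ c : C, PMF ({q : Q // rel q c} → A))
    (W : WellFittingRule A) : Prop :=
  ∃ S : PMF (ConsContent rel → A), BunchMatch rel bunch S ∧
    ∀ q : Q, S.map (fun f (c : {c : C // rel q c}) => f ⟨(q, c.1), c.2⟩) =
      W.rule {c : C // rel q c} (connMarg rel bunch q)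

/-- The bunches of the consistification `R‡`: main bunches `(·,c)` are the
bunches of `R` (with contents relabeled), auxiliary bunches `(q,·)` are
distributed as `C[R_q]`. -/
noncomputable def consBunch {Q C A : Type} [Fintype C] (rel : Q → C → Prop)
    [∀ q c, Decidable (rel q c)]
    (bunch : ∀ c : C, PMF ({q : Q // rel q c} → A))
    (W : WellFittingRule A) :
    ∀ c' : C ⊕ Q, PMF ({p : ConsContent rel // consRel rel p c'} → A)
  | Sum.inl c => (bunch c).map (fun f p =>
      f ⟨p.1.1.1, Eq.mp (congrArg (rel p.1.1.1) (p.2 : p.1.1.2 = c)) p.1.2⟩)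
  | Sum.inr q => (W.rule {c : C // rel q c} (connMarg rel bunch q)).map (fun g p =>
      g ⟨p.1.1.2, Eq.mp (congrArg (fun q' => rel q' p.1.1.2) (p.2 : p.1.1.1 = q)) p.1.2⟩)

/-- The consistification `R‡` of any system is consistently connected. -/
theorem consistification_consistently_connected
    {Q C A : Type} [Fintype Q] [Fintype C] [Fintype A]
    [DecidableEq Q] [DecidableEq C]
    (rel : Q → C → Prop) [∀ q c, Decidable (rel q c)]
    (bunch : ∀ c : C, PMF ({q : Q // rel q c} → A))
    (W : WellFittingRule A) :
    ConsistentlyConnected (consRel rel) (consBunch rel bunch W) := by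
  have key : ∀ (P : ConsContent rel) (c' : C ⊕ Q) (h : consRel rel P c'),
      (consBunch rel bunch W c').map (fun f => f ⟨P, h⟩)
        = (bunch P.1.2).map (fun f => f ⟨P.1.1, P.2⟩) := by
    rintro ⟨⟨q, c⟩, hqc⟩ (c' | q') h
    · cases h
      simp only [consBunch, PMF.map_comp]
      rfl
    · cases h
      simp only [consBunch, PMF.map_comp]
      have hm := W.marg {c0 : C // rel q c0} (connMarg rel bunch q) ⟨c, hqc⟩
      simp only [connMarg, PMF.map] at hm ⊢
      exact hm
  intro P c c' h h'
  rw [key P c h, key P c' h']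
end

section
/- Let R be a system (finite Q, C, finite outcome type A) and C a well-fitting connection-coupling rule. If S is an overall coupling of R witnessing C-noncontextuality (each connection of S is distributed as C[R_q]), then the consistified coupling S‡ — defined on the consistified format by setting the variable with content (q,c) equal to S_q^c in both of its contexts (·,c) and (q,·) — is an overall coupling of the consistification R‡ in which every connection is an identity coupling; hence R‡ is traditionally noncontextual. -/
open scoped ENNReal

/-- If `S` witnesses `C`-noncontextuality of `R`, then its consistification
`S‡ = S.map (fun f pp => f pp.1.1)` (the variable with content `(q,c)` equals
`S_q^c` in both of its contexts) is an overall coupling of `R‡` all of whose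
connections are identity couplings; hence `R‡` is traditionally noncontextual. -/
theorem consistified_coupling_witnesses_trad_noncontextuality
    {Q C A : Type} [Fintype Q] [Fintype C] [Fintype A]
    [DecidableEq Q] [DecidableEq C]
    (rel : Q → C → Prop) [∀ q c, Decidable (rel q c)]
    (bunch : ∀ c : C, PMF ({q : Q // rel q c} → A))
    (W : WellFittingRule A)
    (S : PMF (ConsContent rel → A))
    (hb : BunchMatch rel bunch S)
    (hconn : ∀ q : Q,
      S.map (fun f (c : {c : C // rel q c}) => f ⟨(q, c.1), c.2⟩) =
        W.rule {c : C // rel q c} (connMarg rel bunch q)) :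
    BunchMatch (consRel rel) (consBunch rel bunch W)
      (S.map (fun f (pp : ConsContent (consRel rel)) => f pp.1.1)) ∧
    (∀ f ∈ (S.map (fun f (pp : ConsContent (consRel rel)) => f pp.1.1)).support,
      ∀ (p : ConsContent rel) (d d' : C ⊕ Q)
        (h : consRel rel p d) (h' : consRel rel p d'),
        f ⟨(p, d), h⟩ = f ⟨(p, d'), h'⟩) ∧
    TradNoncontextual (consRel rel) (consBunch rel bunch W) := by
  set F : (ConsContent rel → A) → (ConsContent (consRel rel) → A) :=
    fun f pp => f pp.1.1 with hF
  have hmatch : BunchMatch (consRel rel) (consBunch rel bunch W) (S.map F) := by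
    intro d
    rw [PMF.map_comp]
    cases d with
    | inl c =>
      show _ = consBunch rel bunch W (Sum.inl c)
      rw [show consBunch rel bunch W (Sum.inl c) = (bunch c).map (fun f p =>
          f ⟨p.1.1.1, Eq.mp (congrArg (rel p.1.1.1) (p.2 : p.1.1.2 = c)) p.1.2⟩) from rfl,
        ← hb c, PMF.map_comp]
      congr 1
      funext g
      funext p
      show g p.1 = g ⟨(p.1.1.1, c), _⟩
      congr 1
      exact Subtype.ext (Prod.ext rfl p.2)
    | inr q =>
      show _ = consBunch rel bunch W (Sum.inr q)
      rw [show consBunch rel bunch W (Sum.inr q) =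
          (W.rule {c : C // rel q c} (connMarg rel bunch q)).map (fun g p =>
            g ⟨p.1.1.2, Eq.mp (congrArg (fun q' => rel q' p.1.1.2) (p.2 : p.1.1.1 = q)) p.1.2⟩)
          from rfl,
        ← hconn q, PMF.map_comp]
      congr 1
      funext g
      funext p
      show g p.1 = g ⟨(q, p.1.1.2), _⟩
      congr 1
      exact Subtype.ext (Prod.ext p.2 rfl)
  have hident : ∀ f ∈ (S.map F).support,
      ∀ (p : ConsContent rel) (d d' : C ⊕ Q)
        (h : consRel rel p d) (h' : consRel rel p d'),
        f ⟨(p, d), h⟩ = f ⟨(p, d'), h'⟩ := by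
    intro f hf p d d' h h'
    rw [PMF.support_map] at hf
    obtain ⟨g, -, rfl⟩ := hf
    rfl
  exact ⟨hmatch, hident, S.map F, hmatch, hident⟩
end

section
/- Let R be a system (finite Q, C, finite outcome type A) and C a well-fitting connection-coupling rule. If the consistification R‡ is traditionally noncontextual, then R is C-noncontextual: from any overall coupling T of R‡ in which each connection {(q,c) in contexts (·,c) and (q,·)} is an identity coupling, the restriction of T to the main-context variables yields an overall coupling S of R whose connection distributions equal C[R_q] for all q. -/
open scoped ENNReal

lemma pmf_map_congr_support {α β : Type*} (p : PMF α) {f g : α → β}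
    (h : ∀ a ∈ p.support, f a = g a) : p.map f = p.map g := by
  ext b
  simp only [PMF.map_apply]
  refine tsum_congr fun a => ?_
  by_cases ha : p a = 0
  · simp [ha]
  · rw [h a (by simpa [PMF.mem_support_iff] using ha)]

/-- If the consistification `R‡` is traditionally noncontextual, then `R` is
`C`-noncontextual: restricting a witnessing coupling `T` of `R‡` to the
main-context variables yields an overall coupling of `R` whose connection
distributions are `C[R_q]`. -/
theorem trad_noncontextuality_of_consistification_yields_cNoncontextuality
    {Q C A : Type} [Fintype Q] [Fintype C] [Fintype A]
    [DecidableEq Q] [DecidableEq C]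
    (rel : Q → C → Prop) [∀ q c, Decidable (rel q c)]
    (bunch : ∀ c : C, PMF ({q : Q // rel q c} → A))
    (W : WellFittingRule A)
    (T : PMF (ConsContent (consRel rel) → A))
    (hb : BunchMatch (consRel rel) (consBunch rel bunch W) T)
    (hid : ∀ f ∈ T.support,
      ∀ (p : ConsContent rel) (d d' : C ⊕ Q)
        (h : consRel rel p d) (h' : consRel rel p d'),
        f ⟨(p, d), h⟩ = f ⟨(p, d'), h'⟩) :
    BunchMatch rel bunch
      (T.map (fun f (p : ConsContent rel) => f ⟨(p, Sum.inl p.1.2), rfl⟩)) ∧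
    (∀ q : Q,
      (T.map (fun f (p : ConsContent rel) => f ⟨(p, Sum.inl p.1.2), rfl⟩)).map
          (fun f (c : {c : C // rel q c}) => f ⟨(q, c.1), c.2⟩) =
        W.rule {c : C // rel q c} (connMarg rel bunch q)) ∧
    CNoncontextual rel bunch W := by
  set S : PMF (ConsContent rel → A) :=
    T.map (fun f (p : ConsContent rel) => f ⟨(p, Sum.inl p.1.2), rfl⟩) with hS
  have main : BunchMatch rel bunch S := by
    intro c
    have h1 := congrArg (PMF.map (fun h (q : {q : Q // rel q c}) =>
      h (⟨(⟨(q.1, c), q.2⟩ : ConsContent rel), rfl⟩ :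
        {p : ConsContent rel // consRel rel p (Sum.inl c)}))) (hb (Sum.inl c))
    rw [PMF.map_comp] at h1
    simp only [consBunch] at h1
    rw [PMF.map_comp] at h1
    have h2 : ((bunch c).map (fun (f : {q : Q // rel q c} → A) q => f q)) = bunch c := by
      rw [show (fun (f : {q : Q // rel q c} → A) q => f q)
          = (id : ({q : Q // rel q c} → A) → _) from rfl, PMF.map_id]
    calc S.map (fun f (q : {q : Q // rel q c}) => f ⟨(q.1, c), q.2⟩)
        = T.map (fun f (q : {q : Q // rel q c}) =>
            f ⟨(⟨(q.1, c), q.2⟩, Sum.inl c), rfl⟩) := by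
          rw [hS, PMF.map_comp]; rfl
      _ = bunch c := by rw [← h2]; exact h1
  have conn : ∀ q : Q, S.map (fun f (c : {c : C // rel q c}) => f ⟨(q, c.1), c.2⟩) =
      W.rule {c : C // rel q c} (connMarg rel bunch q) := by
    intro q
    have h1 := congrArg (PMF.map (fun h (c : {c : C // rel q c}) =>
      h (⟨(⟨(q, c.1), c.2⟩ : ConsContent rel), rfl⟩ :
        {p : ConsContent rel // consRel rel p (Sum.inr q)}))) (hb (Sum.inr q))
    rw [PMF.map_comp] at h1
    simp only [consBunch] at h1
    rw [PMF.map_comp] at h1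
    have h2 : ((W.rule {c : C // rel q c} (connMarg rel bunch q)).map
        (fun (g : {c : C // rel q c} → A) c => g c)) =
        W.rule {c : C // rel q c} (connMarg rel bunch q) := by
      rw [show (fun (g : {c : C // rel q c} → A) c => g c)
          = (id : ({c : C // rel q c} → A) → _) from rfl, PMF.map_id]
    have h3 : S.map (fun f (c : {c : C // rel q c}) => f ⟨(q, c.1), c.2⟩)
        = T.map (fun f (c : {c : C // rel q c}) =>
            f ⟨(⟨(q, c.1), c.2⟩, Sum.inl c.1), rfl⟩) := by
      rw [hS, PMF.map_comp]; rfl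
    have h4 : T.map (fun f (c : {c : C // rel q c}) =>
            f ⟨(⟨(q, c.1), c.2⟩, Sum.inl c.1), rfl⟩)
        = T.map (fun f (c : {c : C // rel q c}) =>
            f ⟨(⟨(q, c.1), c.2⟩, Sum.inr q), rfl⟩) := by
      refine pmf_map_congr_support T fun f hf => ?_
      funext c
      exact hid f hf ⟨(q, c.1), c.2⟩ (Sum.inl c.1) (Sum.inr q) rfl rfl
    rw [h3, h4, ← h2]
    exact h1
  exact ⟨main, conn, S, main, conn⟩
end

section
/- Conversely, if a system R (finite Q, C, finite outcomes) admits a hidden-variable representation—i.e., there exist a finite type Λ, a PMF λ on Λ, and F : Q → Λ → A such that for every context c, the bunch PMF of c equals the law of (q ↦ F q ℓ) restricted to {q // q ≺ c} with ℓ ∼ λ—then R is consistently connected and traditionally noncontextual. -/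
open scoped ENNReal

/-- A hidden-variable representation of all bunches implies consistent
connectedness and traditional noncontextuality. -/
theorem hvm_implies_consistent_connectedness_and_trad_noncontextuality
    {Q C A : Type} [Fintype Q] [Fintype C] [Fintype A]
    (rel : Q → C → Prop) [∀ q c, Decidable (rel q c)]
    (bunch : ∀ c : C, PMF ({q : Q // rel q c} → A))
    (Λ : Type) [Fintype Λ] (lam : PMF Λ) (F : Q → Λ → A)
    (hrep : ∀ c : C,
      bunch c = lam.map (fun ℓ (q : {q : Q // rel q c}) => F q.1 ℓ)) :
    -- consistent connectedness
    (∀ (q : Q) (c c' : C) (h : rel q c) (h' : rel q c'),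
      (bunch c).map (fun f => f ⟨q, h⟩) = (bunch c').map (fun f => f ⟨q, h'⟩)) ∧
    -- traditional noncontextuality
    (∃ S : PMF ({p : Q × C // rel p.1 p.2} → A),
      (∀ c : C,
        S.map (fun f (q : {q : Q // rel q c}) => f ⟨(q.1, c), q.2⟩) = bunch c) ∧
      ∀ f ∈ S.support, ∀ (q : Q) (c c' : C) (h : rel q c) (h' : rel q c'),
        f ⟨(q, c), h⟩ = f ⟨(q, c'), h'⟩) := by
  constructor
  · intro q c c' h h'
    rw [hrep c, hrep c', PMF.map_comp, PMF.map_comp]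
    rfl
  · refine ⟨lam.map (fun ℓ (p : {p : Q × C // rel p.1 p.2}) => F p.1.1 ℓ), ?_, ?_⟩
    · intro c
      rw [hrep c, PMF.map_comp]
      rfl
    · intro f hf q c c' h h'
      rw [PMF.support_map] at hf
      obtain ⟨ℓ, _, rfl⟩ := hf
      rfl
end
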